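/- Define ν(κ,λ) := (8λ + κ − 4 + √((κ − 4)² + 16κλ))/16 for κ > 0 and λ > 0 (the annulus crossing exponent of SLE(κ)), and let v_k⁺ := k(k+1)/6. Then for every integer k ≥ 2 one has ν(6, v⁺_{k−2}) = ν(6, (k−2)(k−1)/6) = (k² − 1)/12. Consequently the probability that the radial/chordal SLE(6) exploration process crosses the annulus {r < |z| < R} a total of k − 1 times before disconnecting the inner from the outer circle decays like (R/r)^{−(k²−1)/12}, giving the plane k-arm (dichromatic) percolation exponent (k² − 1)/12. -/
import Mathlib

open Set Filter

/-- The annulus crossing exponent `ν(κ,λ) = (8λ+κ−4+√((κ−4)²+16κλ))/16` of SLE(κ). -/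
noncomputable def annulusCrossingExponent (κ lam : ℝ) : ℝ :=
  (8 * lam + κ - 4 + Real.sqrt ((κ - 4) ^ 2 + 16 * κ * lam)) / 16

/-- The half-plane crossing exponents `v_k⁺ = k(k+1)/6` of SLE(6). -/
noncomputable def vPlus (k : ℝ) : ℝ := k * (k + 1) / 6

/-- The plane multi-arm percolation exponents: for `k ≥ 2`,
`ν(6, v⁺_{k−2}) = ν(6, (k−2)(k−1)/6) = (k²−1)/12`. -/
theorem plane_arm_exponents :
    ∀ k : ℕ, 2 ≤ k →
      annulusCrossingExponent 6 (vPlus ((k : ℝ) - 2)) = ((k : ℝ) ^ 2 - 1) / 12 ∧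
      annulusCrossingExponent 6 (((k : ℝ) - 2) * ((k : ℝ) - 1) / 6)
        = ((k : ℝ) ^ 2 - 1) / 12 := by
  intro k hk
  have hk2 : (2 : ℝ) ≤ (k : ℝ) := by exact_mod_cast hk
  have h1 : annulusCrossingExponent 6 (((k : ℝ) - 2) * ((k : ℝ) - 1) / 6)
      = ((k : ℝ) ^ 2 - 1) / 12 := by
    unfold annulusCrossingExponent
    have hs : (6 - 4 : ℝ) ^ 2 + 16 * 6 * (((k : ℝ) - 2) * ((k : ℝ) - 1) / 6)
        = (4 * (k : ℝ) - 6) ^ 2 := by ring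
    rw [hs, Real.sqrt_sq (by linarith)]
    ring
  refine ⟨?_, h1⟩
  have : vPlus ((k : ℝ) - 2) = ((k : ℝ) - 2) * ((k : ℝ) - 1) / 6 := by
    unfold vPlus; ring
  rw [this, h1]
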